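/- Assume additionally that t_j > 0 for all j. Let Z be a complex number with Im Z = γ and 0 < |Z| < t_m, let α = sqrt(1 + |Z|/t_m) + sqrt(1 − |Z|/t_m), and let Ω = (α/2)·1_n + (1/(α t_m))·[[0, conj(Z) P_m], [Z P_m, 0]] be the positive definite square root of M(Z). Then Ω H Ω^{−1} equals the tridiagonal matrix h with entries h_{jj} = Re z_j for 1 ≤ j ≤ n, h_{j,j+1} = h_{j+1,j} = t_j for j ≠ m, h_{m,m+1} = (Re Z/Z)·t_m + i·(Im Z/Z)·sqrt(t_m² − |Z|²), h_{m+1,m} = conj(h_{m,m+1}), and all other entries zero. In particular Ω H Ω^{−1} is Hermitian. -/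

import Mathlib

open Matrix Complex ComplexOrder

/-- The `2m × 2m` tridiagonal Hamiltonian with diagonal entries `z 1, …, z n`
(1-based) and symmetric off-diagonal entries `t 1, …, t (n-1)`. -/
noncomputable def Hop (m : ℕ) (t : ℕ → ℝ) (z : ℕ → ℂ) :
    Matrix (Fin (2*m)) (Fin (2*m)) ℂ :=
  fun i j =>
    if (i : ℕ) = (j : ℕ) then z ((i : ℕ) + 1)
    else if (i : ℕ) + 1 = (j : ℕ) then ((t ((i : ℕ) + 1) : ℝ) : ℂ)
    else if (j : ℕ) + 1 = (i : ℕ) then ((t ((j : ℕ) + 1) : ℝ) : ℂ)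
    else 0

/-- The block matrix `M(Z) = [[1, (conj Z / t_m) P_m],[(Z / t_m) P_m, 1]]`. -/
noncomputable def Mop (m : ℕ) (t : ℕ → ℝ) (Z : ℂ) :
    Matrix (Fin (2*m)) (Fin (2*m)) ℂ :=
  fun i j =>
    if i = j then 1
    else if (i : ℕ) + (j : ℕ) + 1 = 2*m then
      (if (i : ℕ) < m then (starRingEnd ℂ) Z / (t m : ℂ) else Z / (t m : ℂ))
    else 0

/-- The block matrix `Ω = (α/2)·1 + (1/(α t_m))·[[0, conj(Z) P_m],[Z P_m, 0]]`
where `α = sqrt(1 + |Z|/t_m) + sqrt(1 − |Z|/t_m)`. -/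
noncomputable def Om (m : ℕ) (t : ℕ → ℝ) (Z : ℂ) :
    Matrix (Fin (2*m)) (Fin (2*m)) ℂ :=
  fun i j =>
    if i = j then
      ((Real.sqrt (1 + ‖Z‖ / t m) + Real.sqrt (1 - ‖Z‖ / t m)) / 2 : ℝ)
    else if (i : ℕ) + (j : ℕ) + 1 = 2*m then
      (if (i : ℕ) < m then (starRingEnd ℂ) Z else Z) /
        (((Real.sqrt (1 + ‖Z‖ / t m) + Real.sqrt (1 - ‖Z‖ / t m)) : ℝ) * (t m : ℂ))
    else 0

/-- The modified tunnelling amplitude at the defect bond: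
`t'_m = (Re Z / Z) t_m + i (Im Z / Z) sqrt(t_m² − |Z|²)`. -/
noncomputable def hopm (m : ℕ) (t : ℕ → ℝ) (Z : ℂ) : ℂ :=
  ((Z.re : ℂ) / Z) * (t m : ℂ) +
    Complex.I * ((Z.im : ℂ) / Z) * ((Real.sqrt ((t m)^2 - (‖Z‖)^2) : ℝ) : ℂ)

/-- The equivalent Hermitian tridiagonal Hamiltonian `h`. -/
noncomputable def hHerm (m : ℕ) (t : ℕ → ℝ) (z : ℕ → ℂ) (Z : ℂ) :
    Matrix (Fin (2*m)) (Fin (2*m)) ℂ :=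
  fun i j =>
    if (i : ℕ) = (j : ℕ) then (((z ((i : ℕ) + 1)).re : ℝ) : ℂ)
    else if (i : ℕ) + 1 = (j : ℕ) then
      (if (i : ℕ) + 1 = m then hopm m t Z else ((t ((i : ℕ) + 1) : ℝ) : ℂ))
    else if (j : ℕ) + 1 = (i : ℕ) then
      (if (j : ℕ) + 1 = m then (starRingEnd ℂ) (hopm m t Z) else ((t ((j : ℕ) + 1) : ℝ) : ℂ))
    else 0

/-!
Write `Ω = (α/2) • 1 + (α t_m)⁻¹ • K` with `K = [[0, conj Z • P_m], [Z • P_m, 0]]`.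
As `K² = |Z|² • 1`, `Ω ((α/2) • 1 - (α t_m)⁻¹ • K) = (w / t_m) • 1` with `w = √(t_m² - |Z|²)`,
so `Ω` is invertible; and as `α² t_m = 2 (t_m + w)`, `Ω H = h Ω` follows from the `α`-free
identity `(t_m + w) (H - h) = h K - K H`. This is checked entrywise. Off the `2 × 2` block of the
defect sites `m, m + 1`, `H = h` is real and the mirror symmetry `H_{n+1-i, n+1-j} = conj H_{ij}`
turns `(K H)_{ij}` into `(h K)_{ij}`; the factors `conj Z` and `Z` agree because no other bond of
`H` crosses the middle of the chain. On the defect block the identity is one of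
`t'_m Z = t_m conj Z + i γ (t_m + w)`, `(t_m + w) (t_m - t'_m) = i γ conj Z` or their conjugates.
-/

open ComplexConjugate

section Algebra

variable {R A : Type*} [CommRing R] [Ring A] [Algebra R A]

theorem smul_one_add_smul_mul_eq_mul_of_smul_sub {a c s : R} {K H h : A} (ha : a = c * s)
    (hK : s • (H - h) = h * K - K * H) :
    (a • 1 + c • K) * H = h * (a • 1 + c • K) := by
  have hc := congrArg (c • ·) hK
  simp only [smul_sub, smul_smul, ← ha] at hc
  simp only [add_mul, mul_add, smul_mul_assoc, mul_smul_comm, one_mul, mul_one]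
  rw [sub_eq_sub_iff_add_eq_add] at hc
  rw [hc, add_comm]

theorem smul_one_add_smul_mul_smul_one_sub_smul {a c r : R} {K : A} (hK : K * K = r • 1) :
    (a • 1 + c • K) * (a • 1 - c • K) = (a ^ 2 - c ^ 2 * r) • 1 := by
  simp only [add_mul, mul_sub, smul_mul_assoc, mul_smul_comm, one_mul, mul_one, hK, smul_smul]
  module

end Algebra

theorem sqrt_one_add_add_sqrt_one_sub_sq_mul {x T : ℝ} (hT : 0 < T) (hx : 0 ≤ x) (hxT : x ≤ T) :
    (√(1 + x / T) + √(1 - x / T)) ^ 2 * T = 2 * (T + √(T ^ 2 - x ^ 2)) := by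
  have hr : x / T ≤ 1 := (div_le_one hT).mpr hxT
  have hr0 : 0 ≤ x / T := div_nonneg hx hT.le
  have hprod : √(1 + x / T) * √(1 - x / T) * T = √(T ^ 2 - x ^ 2) := by
    have h : (1 + x / T) * (1 - x / T) = (T ^ 2 - x ^ 2) / T ^ 2 := by field_simp; ring
    rw [← Real.sqrt_mul (by linarith), h, Real.sqrt_div' _ (sq_nonneg T), Real.sqrt_sq hT.le,
      div_mul_cancel₀ _ hT.ne']
  rw [add_sq, Real.sq_sqrt (by linarith), Real.sq_sqrt (by linarith), ← hprod]
  ring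

def antidiagCoeff (m : ℕ) (Z : ℂ) (i : Fin (2 * m)) : ℂ := if (i : ℕ) < m then conj Z else Z

def antidiag (m : ℕ) (Z : ℂ) : Matrix (Fin (2 * m)) (Fin (2 * m)) ℂ :=
  Matrix.of fun i j => if i.rev = j then antidiagCoeff m Z i else 0

/-- The index `i : Fin (2 * m)` stands for site `i + 1`, so these are the sites `m` and `m + 1`. -/
def IsDefectSite (m : ℕ) (i : Fin (2 * m)) : Prop := m ≤ (i : ℕ) + 1 ∧ (i : ℕ) ≤ m

noncomputable def omAlpha (m : ℕ) (t : ℕ → ℝ) (Z : ℂ) : ℝ := √(1 + ‖Z‖ / t m) + √(1 - ‖Z‖ / t m)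

section OmAlpha

variable {m : ℕ} {t : ℕ → ℝ} {Z : ℂ}

theorem omAlpha_pos (hT : 0 ≤ t m) : 0 < omAlpha m t Z :=
  add_pos_of_pos_of_nonneg (Real.sqrt_pos.mpr (by positivity)) (Real.sqrt_nonneg _)

theorem omAlpha_sq_mul (hT : 0 < t m) (hZt : ‖Z‖ ≤ t m) :
    omAlpha m t Z ^ 2 * t m = 2 * (t m + √(t m ^ 2 - ‖Z‖ ^ 2)) :=
  sqrt_one_add_add_sqrt_one_sub_sq_mul hT (norm_nonneg Z) hZt

end OmAlpha

section Antidiag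

variable {m : ℕ} {Z : ℂ}

theorem antidiagCoeff_rev (i : Fin (2 * m)) :
    antidiagCoeff m Z i.rev = conj (antidiagCoeff m Z i) := by
  have := i.isLt
  unfold antidiagCoeff
  rw [Fin.val_rev]
  split_ifs <;> first | omega | simp

theorem mul_antidiag_apply (A : Matrix (Fin (2 * m)) (Fin (2 * m)) ℂ) (i j : Fin (2 * m)) :
    (A * antidiag m Z) i j = A i j.rev * antidiagCoeff m Z j.rev := by
  simp [Matrix.mul_apply, antidiag, Fin.rev_eq_iff]

theorem antidiag_mul_apply (A : Matrix (Fin (2 * m)) (Fin (2 * m)) ℂ) (i j : Fin (2 * m)) :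
    (antidiag m Z * A) i j = antidiagCoeff m Z i * A i.rev j := by
  simp [Matrix.mul_apply, antidiag]

theorem antidiag_mul_self : antidiag m Z * antidiag m Z = (‖Z‖ ^ 2 : ℝ) • 1 := by
  ext i j
  rw [mul_antidiag_apply, Matrix.smul_apply, Matrix.one_apply]
  by_cases h : i = j
  · subst h
    simp only [antidiag, Matrix.of_apply, if_pos, antidiagCoeff_rev]
    unfold antidiagCoeff
    split_ifs <;> simp [Complex.mul_conj', Complex.conj_mul']
  · simp [antidiag, h, Fin.rev_eq_iff]

theorem isDefectSite_rev {i : Fin (2 * m)} : IsDefectSite m i.rev ↔ IsDefectSite m i := by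
  have := i.isLt
  unfold IsDefectSite
  rw [Fin.val_rev]
  omega

end Antidiag

theorem Om_eq_smul_one_add_smul_antidiag (m : ℕ) (t : ℕ → ℝ) (Z : ℂ) :
    Om m t Z = (omAlpha m t Z / 2) • 1 + (omAlpha m t Z * t m)⁻¹ • antidiag m Z := by
  ext i j
  have hrev : i.rev = j ↔ (i : ℕ) + j + 1 = 2 * m := by
    rw [Fin.ext_iff, Fin.val_rev]; omega
  by_cases hij : i = j
  · subst hij
    have : ¬ i.rev = i := by rw [hrev]; omega
    simp [Om, antidiag, omAlpha, this]
  · by_cases h : (i : ℕ) + j + 1 = 2 * m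
    · simp [Om, antidiag, omAlpha, hij, h, hrev, antidiagCoeff, div_eq_inv_mul]
    · simp [Om, antidiag, omAlpha, hij, h, hrev]

section Hop

variable {m : ℕ} {t : ℕ → ℝ} {z : ℕ → ℂ}

theorem Hop_rev_rev (htsym : ∀ j, 1 ≤ j → j ≤ 2*m - 1 → t j = t (2*m - j))
    (hzsym : ∀ j, 1 ≤ j → j ≤ 2*m → z (2*m + 1 - j) = conj (z j)) (i k : Fin (2 * m)) :
    Hop m t z i.rev k.rev = conj (Hop m t z i k) := by
  have hi := i.isLt
  have hk := k.isLt
  simp only [Hop, Fin.val_rev]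
  split_ifs <;> first | omega | simp only [map_zero, Complex.conj_ofReal] | skip
  · rw [← hzsym _ (by omega) (by omega)]; congr 1; omega
  · rw [htsym _ (by omega) (by omega)]; congr 3; omega
  · rw [htsym _ (by omega) (by omega)]; congr 3; omega

theorem hHerm_eq_Hop (hzreal : ∀ j, 1 ≤ j → j ≤ 2*m → j ≠ m → j ≠ m + 1 → (z j).im = 0)
    (Z : ℂ) {i k : Fin (2 * m)} (h : ¬ (IsDefectSite m i ∧ IsDefectSite m k)) :
    hHerm m t z Z i k = Hop m t z i k := by
  have hi := i.isLt
  unfold IsDefectSite at h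
  simp only [Hop, hHerm]
  split_ifs <;> first | omega | rfl | skip
  have hzi := hzreal ((i : ℕ) + 1) (by omega) (by omega) (by omega) (by omega)
  exact Complex.ext rfl (by simp [hzi])

theorem conj_Hop (hzreal : ∀ j, 1 ≤ j → j ≤ 2*m → j ≠ m → j ≠ m + 1 → (z j).im = 0)
    {i k : Fin (2 * m)} (h : ¬ (IsDefectSite m i ∧ IsDefectSite m k)) :
    conj (Hop m t z i k) = Hop m t z i k := by
  have hi := i.isLt
  unfold IsDefectSite at h
  simp only [Hop]
  split_ifs <;> first | omega | simp only [map_zero, Complex.conj_ofReal] | skip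
  exact Complex.conj_eq_iff_im.mpr
    (hzreal ((i : ℕ) + 1) (by omega) (by omega) (by omega) (by omega))

theorem Hop_mul_antidiagCoeff (Z : ℂ) {i k : Fin (2 * m)}
    (h : ¬ (IsDefectSite m i ∧ IsDefectSite m k)) :
    Hop m t z i k * antidiagCoeff m Z k = antidiagCoeff m Z i * Hop m t z i k := by
  unfold IsDefectSite at h
  simp only [Hop, antidiagCoeff]
  split_ifs <;> first | omega | ring

end Hop

theorem hopm_mul (m : ℕ) (t : ℕ → ℝ) {Z : ℂ} (hZ : Z ≠ 0) :
    hopm m t Z * Z = t m * conj Z + I * Z.im * (t m + √(t m ^ 2 - ‖Z‖ ^ 2)) := by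
  have hre : (Z.re : ℂ) = conj Z + Z.im * I := by apply Complex.ext <;> simp
  unfold hopm
  field_simp
  rw [hre]
  ring

theorem add_sqrt_mul_sub_hopm {m : ℕ} {t : ℕ → ℝ} {Z : ℂ} (hZ : Z ≠ 0) (hZt : ‖Z‖ ^ 2 ≤ t m ^ 2) :
    (t m + √(t m ^ 2 - ‖Z‖ ^ 2)) * (t m - hopm m t Z) = I * Z.im * conj Z := by
  have hW : (√(t m ^ 2 - ‖Z‖ ^ 2) : ℂ) ^ 2 = (t m : ℂ) ^ 2 - conj Z * Z := by
    rw [Complex.conj_mul', ← Complex.ofReal_pow, Real.sq_sqrt (by linarith)]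
    push_cast; ring
  have him : Z - conj Z = 2 * I * Z.im := by
    rw [Complex.sub_conj]; push_cast; ring
  refine mul_right_cancel₀ hZ ?_
  linear_combination (-(t m + √(t m ^ 2 - ‖Z‖ ^ 2) : ℂ)) * hopm_mul m t hZ
    + (t m * (t m + √(t m ^ 2 - ‖Z‖ ^ 2)) : ℂ) * him - I * Z.im * hW

theorem smul_Hop_sub_hHerm_apply_of_isDefectSite {m : ℕ} {t : ℕ → ℝ} {z : ℕ → ℂ} {Z : ℂ}
    (hzsym : ∀ j, 1 ≤ j → j ≤ 2*m → z (2*m + 1 - j) = conj (z j))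
    (hZim : Z.im = (z m).im) (hZ : Z ≠ 0) (hZt : ‖Z‖ ^ 2 ≤ t m ^ 2)
    {i j : Fin (2 * m)} (hi : IsDefectSite m i) (hj : IsDefectSite m j) :
    (t m + √(t m ^ 2 - ‖Z‖ ^ 2)) * (Hop m t z i j - hHerm m t z Z i j) =
      hHerm m t z Z i j.rev * antidiagCoeff m Z j.rev -
        antidiagCoeff m Z i * Hop m t z i.rev j := by
  unfold IsDefectSite at hi hj
  obtain ⟨p, rfl⟩ : ∃ p, m = p + 1 := ⟨m - 1, by omega⟩
  have hz : z (p + 1) = ((z (p + 1)).re : ℂ) + I * Z.im := by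
    rw [hZim]; exact (Complex.re_add_im _).symm.trans (by ring)
  have hz' : z (p + 1 + 1) = ((z (p + 1)).re : ℂ) - I * Z.im := by
    have h := hzsym (p + 1) (by omega) (by omega)
    rw [show 2 * (p + 1) + 1 - (p + 1) = p + 1 + 1 by omega] at h
    rw [h, hz]; simp [sub_eq_add_neg]
  have hre : ((z (p + 1 + 1)).re : ℂ) = (z (p + 1)).re := by rw [hz']; simp
  have S1 := hopm_mul (p + 1) t hZ
  have S2 := add_sqrt_mul_sub_hopm hZ hZt
  have S1' := congrArg conj S1
  have S2' := congrArg conj S2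
  simp only [map_add, map_mul, map_sub, Complex.conj_ofReal, Complex.conj_I,
    Complex.conj_conj] at S1' S2'
  have e1 : 2 * (p + 1) - (p + 1) = p + 1 := by omega
  have e2 : 2 * (p + 1) - (p + 1 + 1) = p := by omega
  rcases (show (i : ℕ) = p ∨ (i : ℕ) = p + 1 by omega) with hi' | hi' <;>
  rcases (show (j : ℕ) = p ∨ (j : ℕ) = p + 1 by omega) with hj' | hj'
  · simp only [Hop, hHerm, antidiagCoeff, Fin.val_rev, hi', hj', e1]
    split_ifs <;>
      first
      | omega
      | linear_combination (t (p + 1) + √(t (p + 1) ^ 2 - ‖Z‖ ^ 2) : ℂ) * hz - S1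
  · simp only [Hop, hHerm, antidiagCoeff, Fin.val_rev, hi', hj', e1, e2]
    split_ifs <;> first | omega | linear_combination S2 + conj Z * hz'
  · simp only [Hop, hHerm, antidiagCoeff, Fin.val_rev, hi', hj', e1, e2, hre]
    split_ifs <;> first | omega | linear_combination S2' + Z * hz
  · simp only [Hop, hHerm, antidiagCoeff, Fin.val_rev, hi', hj', e2, hre]
    split_ifs <;>
      first
      | omega
      | linear_combination (t (p + 1) + √(t (p + 1) ^ 2 - ‖Z‖ ^ 2) : ℂ) * hz' - S1'

theorem smul_Hop_sub_hHerm {m : ℕ} {t : ℕ → ℝ} {z : ℕ → ℂ} {Z : ℂ}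
    (htsym : ∀ j, 1 ≤ j → j ≤ 2*m - 1 → t j = t (2*m - j))
    (hzreal : ∀ j, 1 ≤ j → j ≤ 2*m → j ≠ m → j ≠ m + 1 → (z j).im = 0)
    (hzsym : ∀ j, 1 ≤ j → j ≤ 2*m → z (2*m + 1 - j) = conj (z j))
    (hZim : Z.im = (z m).im) (hZ : Z ≠ 0) (hZt : ‖Z‖ ^ 2 ≤ t m ^ 2) :
    (t m + √(t m ^ 2 - ‖Z‖ ^ 2)) • (Hop m t z - hHerm m t z Z) =
      hHerm m t z Z * antidiag m Z - antidiag m Z * Hop m t z := by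
  ext i j
  rw [Matrix.smul_apply, Matrix.sub_apply, Matrix.sub_apply, mul_antidiag_apply,
    antidiag_mul_apply, Complex.real_smul]
  by_cases hc : IsDefectSite m i ∧ IsDefectSite m j
  · push_cast
    exact smul_Hop_sub_hHerm_apply_of_isDefectSite hzsym hZim hZ hZt hc.1 hc.2
  · have hc' : ¬ (IsDefectSite m i ∧ IsDefectSite m j.rev) := by rwa [isDefectSite_rev]
    have hsym : Hop m t z i.rev j = Hop m t z i j.rev := by
      simpa [conj_Hop hzreal hc'] using Hop_rev_rev htsym hzsym i j.rev
    rw [hHerm_eq_Hop hzreal Z hc, hHerm_eq_Hop hzreal Z hc', hsym,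
      Hop_mul_antidiagCoeff Z hc', sub_self, sub_self, mul_zero]

theorem hHerm_isHermitian (m : ℕ) (t : ℕ → ℝ) (z : ℕ → ℂ) (Z : ℂ) :
    (hHerm m t z Z).IsHermitian := by
  ext i j
  simp only [Matrix.conjTranspose_apply, hHerm]
  split_ifs <;> first | omega | simp_all

theorem Om_mul_Hop_eq_hHerm_mul_Om {m : ℕ} {t : ℕ → ℝ} {z : ℕ → ℂ} {Z : ℂ}
    (htsym : ∀ j, 1 ≤ j → j ≤ 2*m - 1 → t j = t (2*m - j))
    (hzreal : ∀ j, 1 ≤ j → j ≤ 2*m → j ≠ m → j ≠ m + 1 → (z j).im = 0)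
    (hzsym : ∀ j, 1 ≤ j → j ≤ 2*m → z (2*m + 1 - j) = conj (z j))
    (hZim : Z.im = (z m).im) (hZ : Z ≠ 0) (hZt : ‖Z‖ ≤ t m) :
    Om m t Z * Hop m t z = hHerm m t z Z * Om m t Z := by
  have hT : 0 < t m := (norm_pos_iff.mpr hZ).trans_le hZt
  have hα := omAlpha_sq_mul hT hZt
  have hαpos := omAlpha_pos (Z := Z) hT.le
  rw [Om_eq_smul_one_add_smul_antidiag]
  refine smul_one_add_smul_mul_eq_mul_of_smul_sub ?_
    (smul_Hop_sub_hHerm htsym hzreal hzsym hZim hZ (pow_le_pow_left₀ (norm_nonneg Z) hZt 2))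
  field_simp
  linear_combination hα

theorem isUnit_det_Om {m : ℕ} {t : ℕ → ℝ} {Z : ℂ} (hZt : ‖Z‖ < t m) :
    IsUnit (Om m t Z).det := by
  have hT : 0 < t m := (norm_nonneg Z).trans_lt hZt
  have hα := omAlpha_sq_mul hT hZt.le
  have hαpos := omAlpha_pos (Z := Z) hT.le
  have hW : 0 < √(t m ^ 2 - ‖Z‖ ^ 2) := Real.sqrt_pos.mpr (by nlinarith [norm_nonneg Z])
  have hW2 := Real.sq_sqrt (by nlinarith [norm_nonneg Z] : 0 ≤ t m ^ 2 - ‖Z‖ ^ 2)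
  refine Matrix.isUnit_det_of_right_inverse (B := (t m / √(t m ^ 2 - ‖Z‖ ^ 2)) •
    ((omAlpha m t Z / 2) • 1 - (omAlpha m t Z * t m)⁻¹ • antidiag m Z)) ?_
  rw [Om_eq_smul_one_add_smul_antidiag, mul_smul_comm,
    smul_one_add_smul_mul_smul_one_sub_smul antidiag_mul_self, smul_smul]
  convert one_smul ℝ (1 : Matrix (Fin (2 * m)) (Fin (2 * m)) ℂ)
  field_simp
  linear_combination
    (omAlpha m t Z ^ 2 * t m + 2 * t m - 2 * √(t m ^ 2 - ‖Z‖ ^ 2)) * hα - 4 * hW2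

theorem stmt4_general (m : ℕ) (t : ℕ → ℝ) (z : ℕ → ℂ)
    (htsym : ∀ j, 1 ≤ j → j ≤ 2*m - 1 → t j = t (2*m - j))
    (hzreal : ∀ j, 1 ≤ j → j ≤ 2*m → j ≠ m → j ≠ m + 1 → (z j).im = 0)
    (hzsym : ∀ j, 1 ≤ j → j ≤ 2*m → z (2*m + 1 - j) = (starRingEnd ℂ) (z j))
    (Z : ℂ) (hZim : Z.im = (z m).im)
    (hZ0 : 0 < ‖Z‖) (hZ : ‖Z‖ < t m) :
    Om m t Z * Hop m t z * (Om m t Z)⁻¹ = hHerm m t z Z ∧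
      (hHerm m t z Z).IsHermitian := by
  refine ⟨?_, hHerm_isHermitian m t z Z⟩
  rw [Om_mul_Hop_eq_hHerm_mul_Om htsym hzreal hzsym hZim (norm_pos_iff.mp hZ0) hZ.le,
    Matrix.mul_assoc, Matrix.mul_nonsing_inv _ (isUnit_det_Om hZ), Matrix.mul_one]

theorem stmt4 (m : ℕ) (hm : 1 ≤ m) (t : ℕ → ℝ) (z : ℕ → ℂ)
    (ht0 : ∀ j, 1 ≤ j → j ≤ 2*m - 1 → t j ≠ 0)
    (htsym : ∀ j, 1 ≤ j → j ≤ 2*m - 1 → t j = t (2*m - j))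
    (htm : 0 < t m)
    (hzreal : ∀ j, 1 ≤ j → j ≤ 2*m → j ≠ m → j ≠ m + 1 → (z j).im = 0)
    (hzsym : ∀ j, 1 ≤ j → j ≤ 2*m → z (2*m + 1 - j) = (starRingEnd ℂ) (z j))
    (hγ : 0 ≤ (z m).im)
    (htpos : ∀ j, 1 ≤ j → j ≤ 2*m - 1 → 0 < t j)
    (Z : ℂ) (hZim : Z.im = (z m).im)
    (hZ0 : 0 < ‖Z‖) (hZ : ‖Z‖ < t m) :
    Om m t Z * Hop m t z * (Om m t Z)⁻¹ = hHerm m t z Z ∧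
      (hHerm m t z Z).IsHermitian :=
  stmt4_general m t z htsym hzreal hzsym Z hZim hZ0 hZ
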